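/- Let G₁ and G₂ be simple connected graphs of orders m and n respectively, let u ∈ V(G₁) and v ∈ V(G₂), and let G be the graph obtained from G₁ and G₂ by identifying u with v. Let f₁ be a harmonic eigenfunction associated with ρ(𝓛(G₁)). If f₁(u) = 0, then ρ(𝓛(G)) ≥ ρ(𝓛(G₁)). -/

import Mathlib

/-!
Extending `f₁` by zero over the `G₂` side gives a function `g` on `G` with `L g = ρ D g`,
`ρ = ρ(𝓛(G₁))`: at the merged vertex the new edges contribute `f₁(u) - 0 = 0`, and every vertex
of `G₂` sees only zeros. So `D^{1/2} g` is an eigenvector of `𝓛(G)` for `ρ`, and `ρ` is at most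
the largest eigenvalue of the symmetric matrix `𝓛(G)`. Connectivity of `G₁` guarantees that `g`
does not live on isolated vertices, where `D^{1/2} g` would lose it.
-/

open Matrix Finset BigOperators

namespace NLap

variable {V : Type} [Fintype V] [DecidableEq V]

/-- The normalized Laplacian matrix `𝓛(G) = D^{-1/2} (D - A) D^{-1/2}` of a simple graph. -/
noncomputable def normLap (G : SimpleGraph V) [DecidableRel G.Adj] : Matrix V V ℝ :=
  Matrix.diagonal (fun v => (Real.sqrt (G.degree v : ℝ))⁻¹) * G.lapMatrix ℝ *
    Matrix.diagonal (fun v => (Real.sqrt (G.degree v : ℝ))⁻¹)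

/-- The `k`-th smallest eigenvalue (1-indexed, counted with multiplicity) of a real matrix:
the `k`-th element of the sorted multiset of roots of its characteristic polynomial. -/
noncomputable def nthEig (M : Matrix V V ℝ) (k : ℕ) : ℝ :=
  (M.charpoly.roots.sort (· ≤ ·)).getD (k - 1) 0

/-- `λ₂(G)`, the second smallest normalized Laplacian eigenvalue. -/
noncomputable def lambda2 (G : SimpleGraph V) [DecidableRel G.Adj] : ℝ :=
  nthEig (normLap G) 2

/-- `ρ(𝓛(G)) = λ_n(G)`, the normalized Laplacian spectral radius. -/
noncomputable def rhoL (G : SimpleGraph V) [DecidableRel G.Adj] : ℝ :=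
  nthEig (normLap G) (Fintype.card V)

/-- `f` is a harmonic eigenfunction associated with the eigenvalue `lam` of `𝓛(G)`:
`f ≠ 0` and `L f = lam • D f`. -/
def IsHarmonic (G : SimpleGraph V) [DecidableRel G.Adj] (lam : ℝ) (f : V → ℝ) : Prop :=
  f ≠ 0 ∧ G.lapMatrix ℝ *ᵥ f = fun v => lam * ((G.degree v : ℝ) * f v)

/-- `∑_{uv ∈ E(G)} (f(u) - f(v))²`. -/
noncomputable def edgeSum (G : SimpleGraph V) [DecidableRel G.Adj] (f : V → ℝ) : ℝ :=
  ∑ e ∈ G.edgeFinset, Sym2.lift ⟨fun u v => (f u - f v) ^ 2, fun u v => by ring⟩ e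


/-- The graph obtained from `G` by subdividing the edge `uv`:
delete `uv`, add a new vertex `w = Sum.inr ()` and the edges `uw`, `wv`. -/
def subdivide {V : Type} (G : SimpleGraph V) (u v : V) : SimpleGraph (V ⊕ Unit) where
  Adj x y :=
    match x, y with
    | Sum.inl a, Sum.inl b => G.Adj a b ∧ ¬(a = u ∧ b = v) ∧ ¬(a = v ∧ b = u)
    | Sum.inl a, Sum.inr _ => a = u ∨ a = v
    | Sum.inr _, Sum.inl b => b = u ∨ b = v
    | Sum.inr _, Sum.inr _ => False
  symm := by
    constructor
    rintro (a | a) (b | b) h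
    · exact ⟨h.1.symm, fun hc => h.2.2 ⟨hc.2, hc.1⟩, fun hc => h.2.1 ⟨hc.2, hc.1⟩⟩
    · exact h
    · exact h
    · exact h
  loopless := by
    constructor
    rintro (a | a) h
    · exact G.irrefl h.1
    · exact h

instance {V : Type} [DecidableEq V] (G : SimpleGraph V) [DecidableRel G.Adj] (u v : V) :
    DecidableRel (subdivide G u v).Adj := fun x y => by
  rcases x with a | a <;> rcases y with b | b
  · exact inferInstanceAs (Decidable (G.Adj a b ∧ ¬(a = u ∧ b = v) ∧ ¬(a = v ∧ b = u)))
  · exact inferInstanceAs (Decidable (a = u ∨ a = v))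
  · exact inferInstanceAs (Decidable (b = u ∨ b = v))
  · exact inferInstanceAs (Decidable False)

/-- `IsSubdivisionOf H G` : `H` is obtained from `G` (up to isomorphism) by repeatedly
subdividing edges. -/
inductive IsSubdivisionOf : {V W : Type} → SimpleGraph W → SimpleGraph V → Prop
  | iso {V W : Type} {G : SimpleGraph V} {H : SimpleGraph W} :
      Nonempty (G ≃g H) → IsSubdivisionOf H G
  | step {V W : Type} {G : SimpleGraph V} {H : SimpleGraph W} (u v : V) :
      G.Adj u v → IsSubdivisionOf H (subdivide G u v) → IsSubdivisionOf H G

/-- The graph obtained from `G₁` and `G₂` by identifying `u ∈ V(G₁)` with `v ∈ V(G₂)`;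
the merged vertex is `Sum.inl u`. -/
def glue {V₁ V₂ : Type} (G₁ : SimpleGraph V₁) (G₂ : SimpleGraph V₂) (u : V₁) (v : V₂) :
    SimpleGraph (V₁ ⊕ {y : V₂ // y ≠ v}) where
  Adj x y :=
    match x, y with
    | Sum.inl a, Sum.inl b => G₁.Adj a b
    | Sum.inl a, Sum.inr b => a = u ∧ G₂.Adj v b.1
    | Sum.inr a, Sum.inl b => b = u ∧ G₂.Adj v a.1
    | Sum.inr a, Sum.inr b => G₂.Adj a.1 b.1
  symm := by
    constructor
    rintro (a | a) (b | b) h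
    · exact h.symm
    · exact h
    · exact h
    · exact h.symm
  loopless := by
    constructor
    rintro (a | a) h
    · exact G₁.irrefl h
    · exact G₂.irrefl h

instance {V₁ V₂ : Type} [DecidableEq V₁] (G₁ : SimpleGraph V₁) (G₂ : SimpleGraph V₂)
    [DecidableRel G₁.Adj] [DecidableRel G₂.Adj] (u : V₁) (v : V₂) :
    DecidableRel (glue G₁ G₂ u v).Adj := fun x y => by
  rcases x with a | a <;> rcases y with b | b
  · exact inferInstanceAs (Decidable (G₁.Adj a b))
  · exact inferInstanceAs (Decidable (a = u ∧ G₂.Adj v b.1))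
  · exact inferInstanceAs (Decidable (b = u ∧ G₂.Adj v a.1))
  · exact inferInstanceAs (Decidable (G₂.Adj a.1 b.1))

/-- The graph `G - vv₁ - ⋯ - vvₛ + uv₁ + ⋯ + uvₛ`, where `S = {v₁, …, vₛ}`. -/
def shiftEdges {V : Type} [DecidableEq V] (G : SimpleGraph V) (u v : V) (S : Finset V) :
    SimpleGraph V where
  Adj x y := x ≠ y ∧
    ((G.Adj x y ∧ ¬(x = v ∧ y ∈ S) ∧ ¬(y = v ∧ x ∈ S)) ∨ (x = u ∧ y ∈ S) ∨ (y = u ∧ x ∈ S))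
  symm := by
    constructor
    rintro x y ⟨hxy, h⟩
    refine ⟨hxy.symm, ?_⟩
    rcases h with h | h | h
    · exact Or.inl ⟨h.1.symm, h.2.2, h.2.1⟩
    · exact Or.inr (Or.inr h)
    · exact Or.inr (Or.inl h)
  loopless := ⟨fun x h => h.1 rfl⟩

instance {V : Type} [DecidableEq V] (G : SimpleGraph V) [DecidableRel G.Adj] (u v : V)
    (S : Finset V) : DecidableRel (shiftEdges G u v S).Adj := fun x y =>
  inferInstanceAs (Decidable (_ ∧ _))

/-- The star on `n + 1` vertices, with center `none`. -/
def starGraph (n : ℕ) : SimpleGraph (Option (Fin n)) where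
  Adj i j := (i = none ∧ j ≠ none) ∨ (j = none ∧ i ≠ none)
  symm := by
    constructor
    rintro i j (h | h)
    · exact Or.inr h
    · exact Or.inl h
  loopless := by
    constructor
    rintro i (h | h) <;> exact h.2 h.1

instance (n : ℕ) : DecidableRel (starGraph n).Adj := fun i j =>
  inferInstanceAs (Decidable (_ ∨ _))


end NLap

theorem Multiset.le_getD_sort_card_sub_one {α : Type*} [LinearOrder α] {s : Multiset α} {a : α}
    (d : α) (ha : a ∈ s) : a ≤ (s.sort (· ≤ ·)).getD (Multiset.card s - 1) d := by
  obtain ⟨i, rfl⟩ := List.mem_iff_get.mp ((Multiset.mem_sort (· ≤ ·)).2 ha)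
  have hi : (i : ℕ) < Multiset.card s := Multiset.length_sort (s := s) (· ≤ ·) ▸ i.2
  have hlast : Multiset.card s - 1 < (s.sort (· ≤ ·)).length := by
    rw [Multiset.length_sort]; omega
  rw [List.getD_eq_getElem _ d hlast]
  refine (s.pairwise_sort _).rel_get_of_le (b := ⟨_, hlast⟩) ?_
  change (i : ℕ) ≤ Multiset.card s - 1
  omega

theorem Matrix.mem_roots_charpoly_of_mulVec_eq_smul {n K : Type*} [Fintype n] [DecidableEq n]
    [Field K] {A : Matrix n n K} {μ : K} {x : n → K} (hx : x ≠ 0) (h : A *ᵥ x = μ • x) :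
    μ ∈ A.charpoly.roots := by
  have hμ : Module.End.HasEigenvalue A.toLin' μ :=
    Module.End.hasEigenvalue_of_hasEigenvector ⟨by simpa [Module.End.mem_eigenspace_iff], hx⟩
  rw [Polynomial.mem_roots A.charpoly_monic.ne_zero, ← Matrix.mem_spectrum_iff_isRoot_charpoly,
    ← Matrix.spectrum_toLin']
  exact hμ.mem_spectrum

theorem SimpleGraph.Connected.eq_of_degree_eq_zero {V : Type*} {G : SimpleGraph V}
    (hG : G.Connected) {a : V} [Fintype (G.neighborSet a)] (ha : G.degree a = 0) (b : V) :
    b = a := by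
  by_contra hba
  have : Nontrivial V := ⟨⟨b, a, hba⟩⟩
  exact (hG.preconnected.degree_pos_of_nontrivial a).ne' ha

theorem SimpleGraph.lapMatrix_mulVec_apply_eq_sum {V R : Type*} [Fintype V] [DecidableEq V]
    [NonAssocRing R] (G : SimpleGraph V) [DecidableRel G.Adj] (f : V → R) (x : V) :
    (G.lapMatrix R *ᵥ f) x = ∑ y, if G.Adj x y then f x - f y else 0 := by
  rw [G.lapMatrix_mulVec_apply, ← G.card_neighborFinset_eq_degree, ← nsmul_eq_mul, ← sum_const,
    ← sum_sub_distrib, G.neighborFinset_eq_filter, sum_filter]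

theorem SimpleGraph.degree_mul_eq_sum_if_adj {V R : Type*} [Fintype V] [NonAssocSemiring R]
    (G : SimpleGraph V) [DecidableRel G.Adj] (x : V) (c : R) :
    (G.degree x : R) * c = ∑ y, if G.Adj x y then c else 0 := by
  simp only [G.degree_eq_sum_if_adj (R := R), sum_mul, ite_mul, one_mul, zero_mul]

namespace NLap

variable {V : Type} [Fintype V] [DecidableEq V]

theorem le_nthEig_card_of_mulVec_eq_smul {M : Matrix V V ℝ} (hM : M.IsHermitian) {μ : ℝ}
    {x : V → ℝ} (hx : x ≠ 0) (h : M *ᵥ x = μ • x) : μ ≤ nthEig M (Fintype.card V) := by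
  have hcard : Multiset.card M.charpoly.roots = Fintype.card V := by
    simp [hM.roots_charpoly_eq_eigenvalues]
  unfold nthEig
  rw [← hcard]
  exact Multiset.le_getD_sort_card_sub_one 0 (Matrix.mem_roots_charpoly_of_mulVec_eq_smul hx h)

theorem isHermitian_normLap (G : SimpleGraph V) [DecidableRel G.Adj] :
    (normLap G).IsHermitian := by
  have := isHermitian_conjTranspose_mul_mul (diagonal fun v => (Real.sqrt (G.degree v : ℝ))⁻¹)
    (G.isHermitian_lapMatrix ℝ)
  rwa [diagonal_conjTranspose, star_trivial] at this

-- The hypothesis on isolated vertices is what makes `D^{-1/2} D^{1/2} f = f` despite `0⁻¹ = 0`.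
theorem normLap_mulVec_sqrt_degree_mul {G : SimpleGraph V} [DecidableRel G.Adj] {μ : ℝ}
    {f : V → ℝ} (hf : G.lapMatrix ℝ *ᵥ f = fun x => μ * ((G.degree x : ℝ) * f x))
    (hiso : ∀ x, G.degree x = 0 → f x = 0) :
    normLap G *ᵥ (fun x => √(G.degree x : ℝ) * f x) = μ • fun x => √(G.degree x : ℝ) * f x := by
  have hf' :
      diagonal (fun x => (√(G.degree x : ℝ))⁻¹) *ᵥ (fun x => √(G.degree x : ℝ) * f x) = f := by
    funext x
    rw [mulVec_diagonal]
    by_cases hx : G.degree x = 0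
    · simp [hiso x hx]
    · have : √(G.degree x : ℝ) ≠ 0 := Real.sqrt_ne_zero'.2 (by positivity)
      field_simp
  rw [normLap, ← mulVec_mulVec, ← mulVec_mulVec, hf', hf]
  funext x
  rw [mulVec_diagonal, Pi.smul_apply, smul_eq_mul]
  set s := √(G.degree x : ℝ)
  rw [← Real.mul_self_sqrt (Nat.cast_nonneg (G.degree x))]
  calc s⁻¹ * (μ * (s * s * f x)) = μ * (s * s / s * f x) := by ring
    _ = μ * (s * f x) := by rw [mul_self_div_self]

theorem IsHarmonic.le_rhoL {G : SimpleGraph V} [DecidableRel G.Adj] {μ : ℝ} {f : V → ℝ}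
    (hf : IsHarmonic G μ f) (hiso : ∀ x, G.degree x = 0 → f x = 0) : μ ≤ rhoL G := by
  obtain ⟨hne, hLf⟩ := hf
  refine le_nthEig_card_of_mulVec_eq_smul (isHermitian_normLap G) ?_
    (normLap_mulVec_sqrt_degree_mul hLf hiso)
  obtain ⟨x, hx⟩ := Function.ne_iff.mp hne
  have hdeg : (0 : ℝ) < G.degree x := by
    have := mt (hiso x) hx
    positivity
  exact Function.ne_iff.mpr ⟨x, mul_ne_zero (Real.sqrt_pos.2 hdeg).ne' hx⟩

section Glue

variable {V₁ V₂ : Type} [Fintype V₁] [DecidableEq V₁] [Fintype V₂] [DecidableEq V₂]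
  {G₁ : SimpleGraph V₁} {G₂ : SimpleGraph V₂} [DecidableRel G₁.Adj] [DecidableRel G₂.Adj]
  {u : V₁} {v : V₂}

theorem degree_le_degree_glue_inl (a : V₁) :
    G₁.degree a ≤ (glue G₁ G₂ u v).degree (.inl a) := by
  rw [← SimpleGraph.card_neighborFinset_eq_degree, ← SimpleGraph.card_neighborFinset_eq_degree]
  exact card_le_card_of_injOn Sum.inl
    (fun b hb => (SimpleGraph.mem_neighborFinset _ _ _).2 ((G₁.mem_neighborFinset _ _).1 hb))
    Sum.inl_injective.injOn

theorem sum_glue_adj_inl {M : Type*} [AddCommMonoid M] (a : V₁)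
    (F : V₁ ⊕ {y : V₂ // y ≠ v} → M) (hF : a = u → ∀ b, F (.inr b) = 0) :
    ∑ y, (if (glue G₁ G₂ u v).Adj (.inl a) y then F y else 0) =
      ∑ b, if G₁.Adj a b then F (.inl b) else 0 := by
  rw [Fintype.sum_sum_type, sum_eq_zero fun b _ => ite_eq_right_iff.2 fun hab => hF hab.1 b,
    add_zero]
  rfl

theorem IsHarmonic.glue_sumElim {μ : ℝ} {f : V₁ → ℝ} (hf : IsHarmonic G₁ μ f) (hu : f u = 0) :
    IsHarmonic (glue G₁ G₂ u v) μ (Sum.elim f 0) := by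
  obtain ⟨hne, hLf⟩ := hf
  refine ⟨fun h => hne (funext fun a => congrFun h (.inl a)), funext ?_⟩
  rintro (a | b)
  · have hdeg : ((glue G₁ G₂ u v).degree (.inl a) : ℝ) * f a = G₁.degree a * f a := by
      rw [SimpleGraph.degree_mul_eq_sum_if_adj, SimpleGraph.degree_mul_eq_sum_if_adj,
        sum_glue_adj_inl a _ fun ha _ => ha ▸ hu]
    rw [SimpleGraph.lapMatrix_mulVec_apply_eq_sum,
      sum_glue_adj_inl a _ fun ha b => by simp [ha, hu]]
    change ∑ b, (if G₁.Adj a b then f a - f b else 0) = μ * (_ * f a)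
    rw [hdeg, ← SimpleGraph.lapMatrix_mulVec_apply_eq_sum, hLf]
  · rw [SimpleGraph.lapMatrix_mulVec_apply_eq_sum]
    refine (Fintype.sum_eq_zero _ ?_).trans (by simp)
    rintro (c | c)
    · exact ite_eq_right_iff.2 fun hbc => by simp [hbc.1, hu]
    · simp

end Glue

theorem stmt15_general {V₁ V₂ : Type} [Fintype V₁] [DecidableEq V₁] [Fintype V₂] [DecidableEq V₂]
    (G₁ : SimpleGraph V₁) (G₂ : SimpleGraph V₂) [DecidableRel G₁.Adj] [DecidableRel G₂.Adj]
    (h₁ : G₁.Connected) (u : V₁) (v : V₂) (f₁ : V₁ → ℝ)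
    (hf₁ : IsHarmonic G₁ (rhoL G₁) f₁) (hu : f₁ u = 0) :
    rhoL G₁ ≤ rhoL (glue G₁ G₂ u v) := by
  refine (hf₁.glue_sumElim hu).le_rhoL ?_
  rintro (a | b) hdeg
  · have ha : G₁.degree a = 0 := Nat.eq_zero_of_le_zero (hdeg ▸ degree_le_degree_glue_inl a)
    change f₁ a = 0
    rwa [← h₁.eq_of_degree_eq_zero ha u]
  · rfl

/-- Theorem 4.2: let `G` be obtained from connected graphs `G₁`, `G₂` by identifying
`u ∈ V(G₁)` with `v ∈ V(G₂)`, and let `f₁` be a harmonic eigenfunction associated with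
`ρ(𝓛(G₁))`. If `f₁(u) = 0`, then `ρ(𝓛(G)) ≥ ρ(𝓛(G₁))`. -/
theorem stmt15 {V₁ V₂ : Type} [Fintype V₁] [DecidableEq V₁] [Fintype V₂] [DecidableEq V₂]
    (G₁ : SimpleGraph V₁) (G₂ : SimpleGraph V₂) [DecidableRel G₁.Adj] [DecidableRel G₂.Adj]
    (h₁ : G₁.Connected) (h₂ : G₂.Connected) (u : V₁) (v : V₂) (f₁ : V₁ → ℝ)
    (hf₁ : IsHarmonic G₁ (rhoL G₁) f₁) (hu : f₁ u = 0) :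
    rhoL G₁ ≤ rhoL (glue G₁ G₂ u v) :=
  stmt15_general G₁ G₂ h₁ u v f₁ hf₁ hu

end NLap
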